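/- (Gross-Prasad divisor matching) Let $a_i = (-1)^i e_i(\alpha_1^2,\dots,\alpha_n^2)$ and let $b_1,\dots,b_n$ be indeterminates with $b_0 = 1$. Then, as polynomials, $\sum_{\lambda \subset n \times (n-1)} m_{2\lambda}(\alpha_1,\dots,\alpha_n) \prod_{k=1}^n (b_{n-\lambda_k} - a_{n-\lambda_k}) = \sum_{\lambda \subset n \times n} m_{2(n-\lambda)}(\alpha_1^2,\dots,\alpha_n^2)\, b_\lambda$, where $m_{2\mu}(\alpha)$ denotes the monomial symmetric polynomial with doubled parts in the variables $\alpha_i$ and $m_\mu(\alpha^2)$ the monomial symmetric polynomial in the variables $\alpha_i^2$, and $b_\lambda = \prod_k b_{\lambda_k}$. -/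

import Mathlib

/-- The monomial symmetric polynomial in `n` variables attached to the exponent
vector `lam : Fin n → ℕ`: the sum of all distinct monomials obtained by permuting
the exponent vector. -/
def msym {R : Type*} [CommRing R] (n : ℕ) (lam : Fin n → ℕ) (α : Fin n → R) : R :=
  ∑ v ∈ Finset.image (fun σ : Equiv.Perm (Fin n) => lam ∘ σ) Finset.univ, ∏ i, α i ^ v i

/-- The `k`-th elementary symmetric polynomial in the `n` variables `α`. -/
def esym {R : Type*} [CommRing R] (n k : ℕ) (α : Fin n → R) : R :=
  ∑ s ∈ Finset.powersetCard k (Finset.univ : Finset (Fin n)), ∏ i ∈ s, α i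

/-- The finset of partitions `λ = (λ₁ ≥ ⋯ ≥ λ_n)` with `n` parts (allowing zero parts),
each part at most `B`; i.e. partitions whose Young diagram fits in an `n × B` box,
encoded as weakly decreasing functions `Fin n → ℕ`. -/
def partsBdd (n B : ℕ) : Finset (Fin n → ℕ) :=
  ((Finset.univ : Finset (Fin n → Fin (B + 1))).filter
      (fun f => ∀ i j : Fin n, i ≤ j → (f j : ℕ) ≤ (f i : ℕ))).image
    (fun f i => (f i : ℕ))

/-!
Write `β_i = α_i²`. Expanding `∏_i (β_i^n + b_1 β_i^(n-1) + ⋯ + b_n)` and grouping the monomials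
by permutation orbits of their exponent vectors gives the right-hand side. Each `β_i` is a root
of `∏_j (X - β_j) = ∑_k a_k X^(n-k)`, so `β_i^n = -∑_{k ≥ 1} a_k β_i^(n-k)`; substituting this in
every factor and grouping in the same way gives the left-hand side.
-/

open Finset

def permOrbit (n : ℕ) (lam : Fin n → ℕ) : Finset (Fin n → ℕ) :=
  univ.image fun σ : Equiv.Perm (Fin n) => lam ∘ σ

theorem mem_permOrbit {n : ℕ} {lam v : Fin n → ℕ} :
    v ∈ permOrbit n lam ↔ ∃ σ : Equiv.Perm (Fin n), lam ∘ σ = v := by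
  simp [permOrbit]

theorem mem_partsBdd {n B : ℕ} {lam : Fin n → ℕ} :
    lam ∈ partsBdd n B ↔ (∀ i, lam i ≤ B) ∧ Antitone lam := by
  simp only [partsBdd, mem_image, mem_filter, mem_univ, true_and]
  constructor
  · rintro ⟨f, hf, rfl⟩
    exact ⟨fun i => Nat.lt_succ_iff.mp (f i).isLt, fun i j hij => hf i j hij⟩
  · rintro ⟨hB, hanti⟩
    exact ⟨fun i => ⟨lam i, Nat.lt_succ_of_le (hB i)⟩, fun i j hij => hanti hij, rfl⟩

theorem eq_of_antitone_of_mem_permOrbit {n : ℕ} {p q v : Fin n → ℕ} (hp : Antitone p)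
    (hq : Antitone q) (hvp : v ∈ permOrbit n p) (hvq : v ∈ permOrbit n q) : p = q := by
  obtain ⟨σ, hσ⟩ := mem_permOrbit.mp hvp
  obtain ⟨τ, hτ⟩ := mem_permOrbit.mp hvq
  obtain rfl : p = v ∘ ⇑σ⁻¹ := by rw [← hσ]; ext; simp
  obtain rfl : q = v ∘ ⇑τ⁻¹ := by rw [← hτ]; ext; simp
  exact congrArg (OrderDual.ofDual ∘ ·)
    (Tuple.unique_monotone (f := OrderDual.toDual ∘ v) hp.dual_right hq.dual_right)

theorem exists_perm_antitone_comp {n : ℕ} (v : Fin n → ℕ) :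
    ∃ σ : Equiv.Perm (Fin n), Antitone (v ∘ σ) :=
  ⟨Tuple.sort (OrderDual.toDual ∘ v), Tuple.monotone_sort (OrderDual.toDual ∘ v)⟩

theorem pairwiseDisjoint_permOrbit_partsBdd (n B : ℕ) :
    (partsBdd n B : Set (Fin n → ℕ)).PairwiseDisjoint (permOrbit n) :=
  fun _ hp _ hq hpq => disjoint_left.mpr fun _ hvp hvq =>
    hpq (eq_of_antitone_of_mem_permOrbit (mem_partsBdd.mp hp).2 (mem_partsBdd.mp hq).2 hvp hvq)

theorem biUnion_permOrbit_partsBdd (n B : ℕ) :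
    (partsBdd n B).biUnion (permOrbit n) = Fintype.piFinset fun _ => range (B + 1) := by
  ext v
  simp only [mem_biUnion, Fintype.mem_piFinset, mem_range, Nat.lt_succ_iff, mem_permOrbit,
    mem_partsBdd]
  constructor
  · rintro ⟨lam, ⟨hB, -⟩, σ, rfl⟩ i
    exact hB (σ i)
  · intro hB
    obtain ⟨σ, hσ⟩ := exists_perm_antitone_comp v
    exact ⟨v ∘ σ, ⟨fun i => hB (σ i), hσ⟩, σ⁻¹, by ext; simp⟩

theorem msym_comp {R : Type*} [CommRing R] {n B : ℕ} {e : ℕ → ℕ} (he : Set.InjOn e (Set.Iic B))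
    {lam : Fin n → ℕ} (hlam : ∀ k, lam k ≤ B) (β : Fin n → R) :
    msym n (fun k => e (lam k)) β = ∑ v ∈ permOrbit n lam, ∏ i, β i ^ e (v i) := by
  have horbit : univ.image (fun σ : Equiv.Perm (Fin n) => (fun k => e (lam k)) ∘ σ)
      = (permOrbit n lam).image (e ∘ ·) := by
    rw [permOrbit, image_image]; rfl
  rw [msym, horbit, sum_image]
  · rfl
  · intro v hv w hw hvw
    obtain ⟨σ, rfl⟩ := mem_permOrbit.mp hv
    obtain ⟨τ, rfl⟩ := mem_permOrbit.mp hw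
    funext i
    exact he (hlam (σ i)) (hlam (τ i)) (congrFun hvw i)

theorem prod_sum_mul_pow_eq_sum_partsBdd {R : Type*} [CommRing R] {n B : ℕ} {e : ℕ → ℕ}
    (he : Set.InjOn e (Set.Iic B)) (c : ℕ → R) (β : Fin n → R) :
    ∏ i, ∑ j ∈ range (B + 1), c j * β i ^ e j
      = ∑ lam ∈ partsBdd n B, msym n (fun k => e (lam k)) β * ∏ k, c (lam k) := by
  rw [prod_univ_sum, ← biUnion_permOrbit_partsBdd,
    sum_biUnion (pairwiseDisjoint_permOrbit_partsBdd n B)]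
  refine sum_congr rfl fun lam hlam => ?_
  rw [msym_comp he (mem_partsBdd.mp hlam).1, sum_mul]
  refine sum_congr rfl fun v hv => ?_
  obtain ⟨σ, rfl⟩ := mem_permOrbit.mp hv
  rw [prod_mul_distrib, mul_comm]
  congr 1
  exact Equiv.prod_comp σ fun k => c (lam k)

theorem sum_esym_mul_pow_eq_zero {R : Type*} [CommRing R] (n : ℕ) (β : Fin n → R) (i : Fin n) :
    ∑ j ∈ range (n + 1), (-1) ^ j * esym n j β * β i ^ (n - j) = 0 := by
  have hroot : ((univ.val.map β).map (Polynomial.X - Polynomial.C ·)).prod.eval (β i) = 0 := by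
    rw [Multiset.map_map, ← prod_eq_multiset_prod, Polynomial.eval_prod]
    exact prod_eq_zero (mem_univ i) (by simp)
  rw [Multiset.prod_X_sub_X_eq_sum_esymm] at hroot
  simp only [Finset.esymm_map_val] at hroot
  simpa [Polynomial.eval_finsetSum, Polynomial.eval_prod, esym, mul_assoc] using hroot

theorem sum_range_sub_mul_pow_of_root {R : Type*} [CommRing R] {n : ℕ} {a b : ℕ → R} {y : R}
    (ha0 : a 0 = 1) (hb0 : b 0 = 1) (hroot : ∑ j ∈ range (n + 1), a j * y ^ (n - j) = 0) :
    ∑ j ∈ range n, (b (n - j) - a (n - j)) * y ^ j = ∑ j ∈ range (n + 1), b j * y ^ (n - j) := by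
  calc ∑ j ∈ range n, (b (n - j) - a (n - j)) * y ^ j
      = ∑ j ∈ range n, (b (j + 1) - a (j + 1)) * y ^ (n - (j + 1)) := by
        rw [← sum_range_reflect]
        refine sum_congr rfl fun j hj => ?_
        have hj := mem_range.mp hj
        rw [show n - (n - 1 - j) = j + 1 by omega, show n - 1 - j = n - (j + 1) by omega]
    _ = ∑ j ∈ range (n + 1), (b j - a j) * y ^ (n - j) := by
        rw [sum_range_succ', ha0, hb0, sub_self, zero_mul, add_zero]
    _ = ∑ j ∈ range (n + 1), b j * y ^ (n - j) := by
        simp only [sub_mul, sum_sub_distrib, hroot, sub_zero]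

/-- Gross–Prasad divisor matching: with `aᵢ = (-1)ⁱ eᵢ(α₁², …, αₙ²)` and `b₀ = 1`,
`∑_{λ ⊂ n × (n-1)} m_{2λ}(α) ∏ₖ (b_{n-λₖ} - a_{n-λₖ})
  = ∑_{λ ⊂ n × n} m_{2(n-λ)}(α) b_λ`,
where `m_{2μ}(α) = m_μ(α²)` is the monomial symmetric polynomial with doubled
parts and `b_λ = ∏ₖ b_{λₖ}`. -/
theorem gross_prasad_divisor_matching {R : Type*} [CommRing R] (n : ℕ)
    (α : Fin n → R) (b : ℕ → R) (hb0 : b 0 = 1) :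
    ∑ lam ∈ partsBdd n (n - 1),
        msym n (fun k => 2 * lam k) α *
          ∏ k : Fin n,
            (b (n - lam k) - (-1 : R) ^ (n - lam k) * esym n (n - lam k) (fun i => α i ^ 2))
      = ∑ lam ∈ partsBdd n n,
          msym n (fun k => 2 * (n - lam k)) α * ∏ k : Fin n, b (lam k) := by
  set a : ℕ → R := fun j => (-1) ^ j * esym n j (fun i => α i ^ 2)
  have hdouble : Set.InjOn (2 * ·) (Set.Iic (n - 1)) := (mul_right_injective₀ two_ne_zero).injOn
  have hcodouble : Set.InjOn (fun j => 2 * (n - j)) (Set.Iic n) := fun x hx y hy h => by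
    simp only [Set.mem_Iic] at hx hy h
    omega
  calc _ = ∏ i, ∑ j ∈ range (n - 1 + 1), (b (n - j) - a (n - j)) * α i ^ (2 * j) :=
        (prod_sum_mul_pow_eq_sum_partsBdd hdouble _ α).symm
    _ = ∏ i, ∑ j ∈ range (n + 1), b j * α i ^ (2 * (n - j)) := by
        refine prod_congr rfl fun i _ => ?_
        simp only [Nat.sub_add_cancel i.pos, pow_mul]
        exact sum_range_sub_mul_pow_of_root (by simp [a, esym]) hb0
          (sum_esym_mul_pow_eq_zero n (fun i => α i ^ 2) i)
    _ = _ := prod_sum_mul_pow_eq_sum_partsBdd hcodouble b α
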